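/- arXiv:1812.07279 — 4 statements merged into one kernel-verified Lean document; each statement's English description precedes it below -/
import Mathlib

section
/- If all n masses are equal (each equal to M/n, M = Σ_i m_i) and q is a normalized central configuration with |q_i| ≤ R for all i, then R^3 ≥ (n−1) M / (4n). -/
/-!
Pairing the terms for `(i, j)` and `(j, i)` after taking the inner product of the central
configuration equation with `m i • q i` gives the virial identity
`2 ∑ mᵢ |qᵢ|² = ∑_{i ≠ j} mᵢ mⱼ / rᵢⱼ`.
Its left side is at most `2 M R²`, while every `rᵢⱼ ≤ 2R`, so with equal masses its right side
is at least `n (n - 1) (M / n)² / (2R)`.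
-/

open Finset RealInnerProductSpace

theorem inner_sub_add_inner_sub_eq_norm_sq {E : Type*} [NormedAddCommGroup E]
    [InnerProductSpace ℝ E] (x y : E) : ⟪x, x - y⟫ + ⟪y, y - x⟫ = ‖x - y‖ ^ 2 := by
  rw [← neg_sub x y, inner_neg_right, ← sub_eq_add_neg, ← inner_sub_left,
    real_inner_self_eq_norm_sq]

theorem pos_of_norm_le_of_ne {E : Type*} [NormedAddCommGroup E] {x y : E} {R : ℝ}
    (hxy : x ≠ y) (hx : ‖x‖ ≤ R) (hy : ‖y‖ ≤ R) : 0 < R := by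
  have : 0 < ‖x - y‖ := norm_pos_iff.2 (sub_ne_zero.2 hxy)
  linarith [norm_sub_le x y]

theorem sum_mul_norm_sq_le {ι E : Type*} [Fintype ι] [NormedAddCommGroup E]
    {m : ι → ℝ} {q : ι → E} {R : ℝ} (hm : ∀ i, 0 ≤ m i) (hR : ∀ i, ‖q i‖ ≤ R) :
    ∑ i, m i * ‖q i‖ ^ 2 ≤ (∑ i, m i) * R ^ 2 := by
  rw [sum_mul]
  gcongr with i
  exacts [hm i, hR i]

section

variable {ι : Type*} [Fintype ι] [DecidableEq ι]

theorem Finset.sum_sum_sdiff_singleton_comm {A : Type*} [AddCommMonoid A] (f : ι → ι → A) :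
    ∑ i, ∑ j ∈ univ \ {i}, f i j = ∑ i, ∑ j ∈ univ \ {i}, f j i :=
  sum_comm' fun i j => by simp [ne_comm, and_comm]

theorem Finset.sum_sum_sdiff_singleton_const {A : Type*} [Ring A] (a : A) :
    ∑ i : ι, ∑ _j ∈ univ \ {i}, a = Fintype.card ι * ((Fintype.card ι : A) - 1) * a := by
  have hcard (i : ι) : (#(univ \ {i}) : A) = Fintype.card ι - 1 := by
    rw [card_univ_sdiff, card_singleton,
      Nat.cast_sub (Fintype.card_pos_iff.2 ⟨i⟩), Nat.cast_one]
  simp only [sum_const, nsmul_eq_mul, hcard, card_univ, ← mul_assoc]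

variable {E : Type*} [NormedAddCommGroup E]

theorem card_mul_card_sub_one_mul_div_le_sum_div_norm_sub {q : ι → E} {R a : ℝ}
    (hq : Function.Injective q) (hR : ∀ i, ‖q i‖ ≤ R) (ha : 0 ≤ a) :
    Fintype.card ι * ((Fintype.card ι : ℝ) - 1) * (a / (2 * R)) ≤
      ∑ i, ∑ j ∈ univ \ {i}, a / ‖q i - q j‖ := by
  rw [← sum_sum_sdiff_singleton_const]
  gcongr with i _ j hj
  · exact norm_pos_iff.2 (sub_ne_zero.2 (hq.ne (by simpa [eq_comm] using hj)))
  · linarith [norm_sub_le (q i) (q j), hR i, hR j]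

variable [InnerProductSpace ℝ E]

def IsNormalizedCentralConfig (m : ι → ℝ) (q : ι → E) : Prop :=
  ∀ i, q i = ∑ j ∈ univ \ {i}, (m j / ‖q i - q j‖ ^ 3) • (q i - q j)

theorem IsNormalizedCentralConfig.two_mul_sum_mul_norm_sq
    {m : ι → ℝ} {q : ι → E} (hcc : IsNormalizedCentralConfig m q) :
    2 * ∑ i, m i * ‖q i‖ ^ 2 = ∑ i, ∑ j ∈ univ \ {i}, m i * m j / ‖q i - q j‖ := by
  set g : ι → ι → ℝ := fun i j => m i * m j / ‖q i - q j‖ ^ 3 * ⟪q i, q i - q j⟫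
  have hrow (i : ι) : m i * ‖q i‖ ^ 2 = ∑ j ∈ univ \ {i}, g i j := by
    rw [← real_inner_self_eq_norm_sq (q i)]
    nth_rw 2 [hcc i]
    rw [inner_sum, mul_sum]
    refine sum_congr rfl fun j _ => ?_
    simp only [g, real_inner_smul_right]
    ring
  -- Since `x / 0 = 0`, the identity `a / r ^ 3 * r ^ 2 = a / r` also holds at `r = 0`.
  have hpair (i j : ι) : g i j + g j i = m i * m j / ‖q i - q j‖ := by
    rcases eq_or_ne ‖q i - q j‖ 0 with h | h
    · simp [g, h, norm_sub_rev (q j) (q i)]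
    · simp only [g, norm_sub_rev (q j) (q i), mul_comm (m j) (m i), ← mul_add,
        inner_sub_add_inner_sub_eq_norm_sq]
      field_simp
  calc 2 * ∑ i, m i * ‖q i‖ ^ 2
      = ∑ i, ∑ j ∈ univ \ {i}, g i j + ∑ i, ∑ j ∈ univ \ {i}, g j i := by
        rw [← sum_sum_sdiff_singleton_comm g, two_mul]
        simp only [hrow]
    _ = ∑ i, ∑ j ∈ univ \ {i}, m i * m j / ‖q i - q j‖ := by
        simp only [← sum_add_distrib, hpair]

end

theorem centralConfig_equal_masses_size_lower_bound
    (n d : ℕ) (hn : 2 ≤ n)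
    (q : Fin n → EuclideanSpace ℝ (Fin d)) (m : Fin n → ℝ) (M R : ℝ)
    (hM : 0 < M)
    (hmeq : ∀ i, m i = M / n)
    (hq : ∀ i j, i ≠ j → q i ≠ q j)
    (hcc : ∀ i, q i = ∑ j ∈ Finset.univ \ {i},
      (m j / ‖q i - q j‖ ^ 3) • (q i - q j))
    (hR : ∀ i, ‖q i‖ ≤ R) :
    R ^ 3 ≥ ((n : ℝ) - 1) * M / (4 * n) := by
  have hinj : Function.Injective q := fun i j => not_imp_not.1 (hq i j)
  have hn' : (2 : ℝ) ≤ n := by exact_mod_cast hn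
  have hR0 : 0 < R := pos_of_norm_le_of_ne (hq ⟨0, by omega⟩ ⟨1, by omega⟩ (by simp))
    (hR _) (hR _)
  set c := M / n with hc
  have hc0 : 0 < c := by positivity
  obtain rfl : m = fun _ => c := funext hmeq
  have hcc' : IsNormalizedCentralConfig (fun _ => c) q := hcc
  have hvirial := hcc'.two_mul_sum_mul_norm_sq
  have hinertia := sum_mul_norm_sq_le (fun _ => hc0.le) hR
  have hpotential :=
    card_mul_card_sub_one_mul_div_le_sum_div_norm_sub hinj hR (mul_nonneg hc0.le hc0.le)
  simp only [sum_const, card_univ, Fintype.card_fin, nsmul_eq_mul] at hinertia hpotential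
  have key : ((n : ℝ) - 1) * c ≤ 4 * R ^ 3 := by
    have hcombined : (n : ℝ) * (n - 1) * (c * c / (2 * R)) ≤ 2 * (n * c * R ^ 2) := by
      linarith
    rw [mul_div_assoc', div_le_iff₀ (by positivity)] at hcombined
    refine le_of_mul_le_mul_left (a := n * c) ?_ (by positivity)
    linarith
  rw [ge_iff_le, show ((n : ℝ) - 1) * M / (4 * n) = (n - 1) * c / 4 by rw [hc]; field_simp]
  linarith
end

section
/- Let q be a normalized central configuration in the plane with total mass M = 1 and n ≥ 2 bodies. Then max_i |q_i| ≤ n − 1. -/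
/-!
Summing the equations of the bodies of a cluster `C`, the mutual forces inside `C` cancel, so
`∑_{k ∈ C} m_k q_k` is the sum of the forces between `C` and its complement. If the complement
keeps distance at least `1` from `C`, each of these forces has norm at most `m_k m_l`; if `C` lies
within `τ` of `q_i`, the left side has norm at least `M(C) (|q_i| - τ)`. Hence
`|q_i| ≤ τ + M(Cᶜ) ≤ τ + 1`. Either all bodies lie within `n - 1` of `q_i` (take `C` to be
everything), or one of the `n - 1` other bodies lies at distance at least `n - 1`; then, by
pigeonhole, one of the annuli `s < |q_i - q| < s + 1` with `s ≤ n - 2` is empty, and we take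
`C` to be the closed ball of radius `s` around `q_i`.
-/

open Finset

theorem exists_forall_notMem_Ioo {ι : Type*} (F : Finset ι) (d : ι → ℝ) {j₀ : ι} (hj₀ : j₀ ∈ F)
    (hfar : (#F : ℝ) ≤ d j₀) : ∃ s : ℕ, s < #F ∧ ∀ j ∈ F, d j ∉ Set.Ioo (s : ℝ) (s + 1) := by
  classical
  obtain ⟨s, hs, hsnot⟩ := exists_mem_notMem_of_card_lt_card
    (s := (F.erase j₀).image fun j => ⌊d j⌋₊) (t := range #F) <| by
      refine card_image_le.trans_lt ?_
      rw [card_erase_of_mem hj₀, card_range]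
      exact Nat.sub_lt (card_pos.2 ⟨j₀, hj₀⟩) one_pos
  have hs : s < #F := mem_range.1 hs
  refine ⟨s, hs, fun j hj hd => ?_⟩
  rcases eq_or_ne j j₀ with rfl | hne
  · have : (s : ℝ) + 1 ≤ #F := by exact_mod_cast hs
    linarith [hd.2]
  · refine hsnot (mem_image.2 ⟨j, mem_erase.2 ⟨hne, hj⟩, ?_⟩)
    exact (Nat.floor_eq_iff ((Nat.cast_nonneg s).trans hd.1.le)).2 ⟨hd.1.le, hd.2⟩

section

variable {ι E : Type*} [NormedAddCommGroup E] [NormedSpace ℝ E]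

theorem sum_sum_eq_zero_of_antisymm {M : Type*} [AddCommGroup M] [IsAddTorsionFree M]
    (s : Finset ι) (f : ι → ι → M) (hf : ∀ i j, f j i = -f i j) :
    ∑ i ∈ s, ∑ j ∈ s, f i j = 0 := by
  refine self_eq_neg.1 ?_
  conv_lhs => rw [sum_comm]
  rw [← sum_neg_distrib]
  exact sum_congr rfl fun j _ => by rw [← sum_neg_distrib]; exact sum_congr rfl fun i _ => hf j i

theorem sum_mul_sub_le_norm_sum_smul (s : Finset ι) {w : ι → ℝ} (hw : ∀ k ∈ s, 0 ≤ w k)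
    {p : E} {q : ι → E} {τ : ℝ} (hτ : ∀ k ∈ s, ‖p - q k‖ ≤ τ) :
    (∑ k ∈ s, w k) * (‖p‖ - τ) ≤ ‖∑ k ∈ s, w k • q k‖ := by
  have hsplit : (∑ k ∈ s, w k) • p = ∑ k ∈ s, w k • q k + ∑ k ∈ s, w k • (p - q k) := by
    simp only [sum_smul, ← sum_add_distrib, smul_sub, add_sub_cancel]
  have hspread : ‖∑ k ∈ s, w k • (p - q k)‖ ≤ (∑ k ∈ s, w k) * τ := by
    rw [sum_mul]
    refine (norm_sum_le _ _).trans (sum_le_sum fun k hk => ?_)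
    rw [norm_smul, Real.norm_of_nonneg (hw k hk)]
    exact mul_le_mul_of_nonneg_left (hτ k hk) (hw k hk)
  have := norm_add_le (∑ k ∈ s, w k • q k) (∑ k ∈ s, w k • (p - q k))
  rw [← hsplit, norm_smul, Real.norm_of_nonneg (sum_nonneg hw)] at this
  linarith

noncomputable def pairForce (m : ι → ℝ) (q : ι → E) (k l : ι) : E :=
  (m k * m l / ‖q k - q l‖ ^ 3) • (q k - q l)

theorem pairForce_swap (m : ι → ℝ) (q : ι → E) (k l : ι) :
    pairForce m q l k = -pairForce m q k l := by
  rw [pairForce, pairForce, ← norm_neg (q k - q l), neg_sub, mul_comm (m l), ← smul_neg, neg_sub]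

theorem pairForce_self (m : ι → ℝ) (q : ι → E) (k : ι) : pairForce m q k k = 0 := by
  simp [pairForce]

theorem norm_pairForce_le {m : ι → ℝ} {q : ι → E} {k l : ι} (hk : 0 ≤ m k) (hl : 0 ≤ m l)
    (hkl : 1 ≤ ‖q k - q l‖) : ‖pairForce m q k l‖ ≤ m k * m l := by
  have hr : 0 < ‖q k - q l‖ := one_pos.trans_le hkl
  rw [pairForce, norm_smul, Real.norm_of_nonneg (by positivity)]
  calc m k * m l / ‖q k - q l‖ ^ 3 * ‖q k - q l‖ = m k * m l / ‖q k - q l‖ ^ 2 := by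
        field_simp
    _ ≤ m k * m l := div_le_self (by positivity) (one_le_pow₀ hkl)

variable [Fintype ι] [DecidableEq ι]

def IsCentralConfig (m : ι → ℝ) (q : ι → E) : Prop :=
  ∀ i, q i = ∑ j ∈ univ \ {i}, (m j / ‖q i - q j‖ ^ 3) • (q i - q j)

namespace IsCentralConfig

variable {m : ι → ℝ} {q : ι → E}

theorem smul_eq_sum_pairForce (h : IsCentralConfig m q) (k : ι) :
    m k • q k = ∑ l, pairForce m q k l := by
  rw [← sum_sdiff (subset_univ {k}), sum_singleton, pairForce_self, add_zero]
  conv_lhs => rw [h k]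
  rw [smul_sum]
  refine sum_congr rfl fun l _ => ?_
  rw [pairForce, smul_smul, mul_div_assoc]

theorem sum_smul_eq_sum_sum_compl_pairForce (h : IsCentralConfig m q) (C : Finset ι) :
    ∑ k ∈ C, m k • q k = ∑ k ∈ C, ∑ l ∈ Cᶜ, pairForce m q k l := by
  have := IsAddTorsionFree.of_isTorsionFree ℝ E
  simp only [h.smul_eq_sum_pairForce, ← sum_add_sum_compl C, sum_add_distrib,
    sum_sum_eq_zero_of_antisymm C _ (pairForce_swap m q), zero_add]

theorem norm_le_add_sum_compl (h : IsCentralConfig m q) (hm : ∀ i, 0 < m i)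
    {C : Finset ι} {i : ι} (hi : i ∈ C) {τ : ℝ} (hτ : ∀ k ∈ C, ‖q i - q k‖ ≤ τ)
    (hsep : ∀ k ∈ C, ∀ l ∉ C, 1 ≤ ‖q k - q l‖) :
    ‖q i‖ ≤ τ + ∑ l ∈ Cᶜ, m l := by
  have hMC : 0 < ∑ k ∈ C, m k := sum_pos (fun k _ => hm k) ⟨i, hi⟩
  have hcross : ‖∑ k ∈ C, ∑ l ∈ Cᶜ, pairForce m q k l‖ ≤ (∑ k ∈ C, m k) * ∑ l ∈ Cᶜ, m l := by
    rw [sum_mul_sum]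
    refine (norm_sum_le _ _).trans (sum_le_sum fun k hk => (norm_sum_le _ _).trans
      (sum_le_sum fun l hl => ?_))
    exact norm_pairForce_le (hm k).le (hm l).le (hsep k hk l (mem_compl.1 hl))
  have hbound := (sum_mul_sub_le_norm_sum_smul C (fun k _ => (hm k).le) hτ).trans
    ((h.sum_smul_eq_sum_sum_compl_pairForce C).symm ▸ hcross)
  linarith [le_of_mul_le_mul_left hbound hMC]

theorem norm_le_card_sub_one (h : IsCentralConfig m q) (hm : ∀ i, 0 < m i) (hM : ∑ i, m i = 1)
    (i : ι) :
    ‖q i‖ ≤ Fintype.card ι - 1 := by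
  set F := univ.erase i
  have hF : (#F : ℝ) = Fintype.card ι - 1 := by
    rw [card_erase_of_mem (mem_univ i), card_univ, Nat.cast_pred (Fintype.card_pos_iff.2 ⟨i⟩)]
  rw [← hF]
  by_cases hfar : ∃ j ∈ F, (#F : ℝ) ≤ ‖q i - q j‖
  · obtain ⟨j₀, hj₀, hj₀far⟩ := hfar
    obtain ⟨s, hs, hgap⟩ := exists_forall_notMem_Ioo F (fun j => ‖q i - q j‖) hj₀ hj₀far
    set C := univ.filter fun k => ‖q i - q k‖ ≤ s
    have hsep : ∀ k ∈ C, ∀ l ∉ C, 1 ≤ ‖q k - q l‖ := by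
      intro k hk l hl
      simp only [C, mem_filter, mem_univ, true_and, not_le] at hk hl
      have hli : l ≠ i := by rintro rfl; simp [(Nat.cast_nonneg s).not_gt] at hl
      have hl_far : (s : ℝ) + 1 ≤ ‖q i - q l‖ :=
        not_lt.1 fun h' => hgap l (mem_erase.2 ⟨hli, mem_univ l⟩) ⟨hl, h'⟩
      linarith [norm_sub_le_norm_sub_add_norm_sub (q i) (q k) (q l)]
    have hout : ∑ l ∈ Cᶜ, m l ≤ 1 :=
      hM ▸ sum_le_univ_sum_of_nonneg fun l => (hm l).le
    have hcluster := h.norm_le_add_sum_compl hm (by simp) (fun k hk => (mem_filter.1 hk).2) hsep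
    have : (s : ℝ) + 1 ≤ #F := by exact_mod_cast hs
    linarith
  · push Not at hfar
    have hτ : ∀ k ∈ univ, ‖q i - q k‖ ≤ #F := fun k _ => by
      rcases eq_or_ne k i with rfl | hk
      · simp
      · exact (hfar k (mem_erase.2 ⟨hk, mem_univ k⟩)).le
    simpa using h.norm_le_add_sum_compl hm (mem_univ i) hτ (by simp)

end IsCentralConfig

end

theorem centralConfig_size_upper_bound_linear_general
    (n : ℕ)
    (q : Fin n → EuclideanSpace ℝ (Fin 2)) (m : Fin n → ℝ)
    (hm : ∀ i, 0 < m i)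
    (hM : ∑ i, m i = 1)
    (hcc : ∀ i, q i = ∑ j ∈ Finset.univ \ {i},
      (m j / ‖q i - q j‖ ^ 3) • (q i - q j)) :
    ∀ i, ‖q i‖ ≤ (n : ℝ) - 1 := fun i => by
  simpa using IsCentralConfig.norm_le_card_sub_one hcc hm hM i

theorem centralConfig_size_upper_bound_linear
    (n : ℕ) (hn : 2 ≤ n)
    (q : Fin n → EuclideanSpace ℝ (Fin 2)) (m : Fin n → ℝ)
    (hm : ∀ i, 0 < m i)
    (hM : ∑ i, m i = 1)
    (hq : ∀ i j, i ≠ j → q i ≠ q j)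
    (hcc : ∀ i, q i = ∑ j ∈ Finset.univ \ {i},
      (m j / ‖q i - q j‖ ^ 3) • (q i - q j)) :
    ∀ i, ‖q i‖ ≤ (n : ℝ) - 1 :=
  centralConfig_size_upper_bound_linear_general n q m hm hM hcc
end

section
/- Cluster exclusion criterion: let C ⊆ {1,...,n} and Z a set of configurations. If I_{C,Z} < U_{C,Z} + F_{C,Z}, where U_{C,Z} = inf_{q∈Z} Σ_{i<j, i,j∈C} m_i m_j / r_{ij}, I_{C,Z} = sup_{q∈Z} Σ_{i∈C} m_i |q_i|², and F_{C,Z} = inf_{q∈Z} Σ_{i∈C, k∉C} (m_i m_k / r_{ik}^3) ⟨q_i − q_k, q_i⟩ (with F_{C,Z} = 0 if C = {1,...,n}), and all three quantities are finite real numbers, then Z contains no normalized central configuration. -/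
/-!
Pairing the equation of a normalized central configuration for `p i` with `m i • p i` writes
`m i * ‖p i‖ ^ 2` as a sum of pair terms `(m i m j / r_ij ^ 3) ⟪p i - p j, p i⟫`. Summed over the
cluster `C`, the terms of a pair inside `C` combine to `m i m j / r_ij`, because
`⟪p i - p j, p i⟫ + ⟪p j - p i, p j⟫ = r_ij ^ 2`, and what is left is the interaction with the
complement of `C`. Hence `∑_{i ∈ C} m i ‖p i‖ ^ 2 ≥ U + F > I`, which is impossible on `Z`.
-/

open Finset
open scoped RealInnerProductSpace

theorem Finset.sum_sum_erase_eq_sum_sum_filter_lt {ι M : Type*} [LinearOrder ι]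
    [DecidableEq ι] [AddCommMonoid M] (s : Finset ι) (f : ι → ι → M) :
    ∑ i ∈ s, ∑ j ∈ s.erase i, f i j = ∑ i ∈ s, ∑ j ∈ s with i < j, (f i j + f j i) := by
  have hsplit : ∀ i, ∑ j ∈ s.erase i, f i j
      = ∑ j ∈ s with i < j, f i j + ∑ j ∈ s with j < i, f i j := by
    intro i
    rw [← sum_union (disjoint_filter.2 fun j _ h₁ h₂ => lt_asymm h₁ h₂), ← filter_or,
      ← filter_ne]
    simp only [ne_iff_lt_or_gt]
  simp only [hsplit, sum_add_distrib]
  congr 1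
  exact sum_comm' fun i j => by simp only [mem_filter]; tauto

theorem real_inner_sub_self_add_inner_sub_self {E : Type*} [NormedAddCommGroup E]
    [InnerProductSpace ℝ E] (x y : E) :
    ⟪x - y, x⟫ + ⟪y - x, y⟫ = ‖x - y‖ ^ 2 := by
  rw [← neg_sub x y, inner_neg_left, ← sub_eq_add_neg, ← inner_sub_right,
    real_inner_self_eq_norm_sq]

section CentralConfiguration

variable {ι E : Type*} [NormedAddCommGroup E] [InnerProductSpace ℝ E] (m : ι → ℝ) (p : ι → E)

noncomputable def virialTerm (i j : ι) : ℝ :=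
  m i * m j / ‖p i - p j‖ ^ 3 * ⟪p i - p j, p i⟫

theorem virialTerm_add_virialTerm_swap (i j : ι) :
    virialTerm m p i j + virialTerm m p j i = m i * m j / ‖p i - p j‖ := by
  have hsum := real_inner_sub_self_add_inner_sub_self (p i) (p j)
  unfold virialTerm
  rw [norm_sub_rev (p j), mul_comm (m j), ← mul_add, hsum]
  -- for coincident positions both sides are `0`, by the convention `x / 0 = 0`
  rcases eq_or_ne ‖p i - p j‖ 0 with h | h
  · simp [h]
  · field_simp

variable [Fintype ι] [DecidableEq ι]

theorem mul_norm_sq_eq_sum_virialTerm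
    (hp : ∀ i, p i = ∑ j ∈ univ \ {i}, (m j / ‖p i - p j‖ ^ 3) • (p i - p j)) (i : ι) :
    m i * ‖p i‖ ^ 2 = ∑ j ∈ univ \ {i}, virialTerm m p i j := by
  rw [← real_inner_self_eq_norm_sq]
  nth_rw 1 [hp i]
  rw [sum_inner, mul_sum]
  refine sum_congr rfl fun j _ => ?_
  rw [real_inner_smul_left, virialTerm]
  ring

theorem sum_mul_norm_sq_eq_sum_div_add_sum_virialTerm [LinearOrder ι]
    (hp : ∀ i, p i = ∑ j ∈ univ \ {i}, (m j / ‖p i - p j‖ ^ 3) • (p i - p j)) (C : Finset ι) :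
    ∑ i ∈ C, m i * ‖p i‖ ^ 2
      = ∑ i ∈ C, ∑ j ∈ C with i < j, m i * m j / ‖p i - p j‖
        + ∑ i ∈ C, ∑ k ∈ Cᶜ, virialTerm m p i k := by
  have hsplit : ∀ i ∈ C, ∑ j ∈ univ \ {i}, virialTerm m p i j
      = ∑ j ∈ C.erase i, virialTerm m p i j + ∑ k ∈ Cᶜ, virialTerm m p i k := by
    intro i hi
    rw [sdiff_singleton_eq_erase, sum_erase_eq_sub (mem_univ i), sum_erase_eq_sub hi,
      ← sum_add_sum_compl C]
    ring
  rw [sum_congr rfl fun i hi => (mul_norm_sq_eq_sum_virialTerm m p hp i).trans (hsplit i hi),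
    sum_add_distrib, sum_sum_erase_eq_sum_sum_filter_lt]
  simp only [virialTerm_add_virialTerm_swap]

end CentralConfiguration

theorem cluster_exclusion_criterion_general
    (n d : ℕ) (m : Fin n → ℝ)
    (Z : Set (Fin n → EuclideanSpace ℝ (Fin d)))
    (C : Finset (Fin n))
    (UCZ ICZ FCZ : ℝ)
    (hU : ∀ p ∈ Z, UCZ ≤ ∑ i ∈ C, ∑ j ∈ C.filter (fun j => i < j),
      m i * m j / ‖p i - p j‖)
    (hI : ∀ p ∈ Z, ∑ i ∈ C, m i * ‖p i‖ ^ 2 ≤ ICZ)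
    (hF : ∀ p ∈ Z, FCZ ≤ ∑ i ∈ C, ∑ k ∈ Cᶜ,
      (m i * m k / ‖p i - p k‖ ^ 3) * (inner ℝ (p i - p k) (p i) : ℝ))
    (hlt : ICZ < UCZ + FCZ) :
    ∀ p ∈ Z, ¬ ((∀ i j, i ≠ j → p i ≠ p j) ∧
      ∀ i, p i = ∑ j ∈ Finset.univ \ {i},
        (m j / ‖p i - p j‖ ^ 3) • (p i - p j)) := by
  rintro p hpZ ⟨-, hp⟩
  have hmoment := sum_mul_norm_sq_eq_sum_div_add_sum_virialTerm m p hp C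
  unfold virialTerm at hmoment
  linarith [hU p hpZ, hI p hpZ, hF p hpZ]

theorem cluster_exclusion_criterion
    (n d : ℕ) (m : Fin n → ℝ)
    (hm : ∀ i, 0 < m i)
    (Z : Set (Fin n → EuclideanSpace ℝ (Fin d)))
    (C : Finset (Fin n)) (hC : C.Nonempty)
    (UCZ ICZ FCZ : ℝ)
    (hU : ∀ p ∈ Z, UCZ ≤ ∑ i ∈ C, ∑ j ∈ C.filter (fun j => i < j),
      m i * m j / ‖p i - p j‖)
    (hI : ∀ p ∈ Z, ∑ i ∈ C, m i * ‖p i‖ ^ 2 ≤ ICZ)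
    (hF : ∀ p ∈ Z, FCZ ≤ ∑ i ∈ C, ∑ k ∈ Cᶜ,
      (m i * m k / ‖p i - p k‖ ^ 3) * (inner ℝ (p i - p k) (p i) : ℝ))
    (hFuniv : C = Finset.univ → FCZ = 0)
    (hlt : ICZ < UCZ + FCZ) :
    ∀ p ∈ Z, ¬ ((∀ i j, i ≠ j → p i ≠ p j) ∧
      ∀ i, p i = ∑ j ∈ Finset.univ \ {i},
        (m j / ‖p i - p j‖ ^ 3) • (p i - p j)) :=
  cluster_exclusion_criterion_general n d m Z C UCZ ICZ FCZ hU hI hF hlt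
end

section
/- Reduced system recovers full system: in the plane (d = 2), fix k ∈ {1,...,n−1} and suppose (q_1,...,q_n) satisfies: (a) m_i q_i = f_i for all i ∈ {1,...,n−1} with i ≠ k; (b) the x-component equation m_k x_k = f_{k,x}; (c) q_n = −(1/m_n) Σ_{i=1}^{n−1} m_i q_i. If moreover x_k ≠ x_n, then also m_k y_k = f_{k,y}, i.e. (q_1,...,q_n) is a normalized central configuration satisfying q_i = (1/m_i) f_i for all i = 1,...,n. -/
/-!
Let `r i = f i - m i • q i`. Since the total force vanishes and the centre of mass is at the
origin, `∑ r i = 0`; since the total torque `∑ f i ∧ q i` vanishes and `q i ∧ q i = 0`,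
also `∑ r i ∧ q i = 0`. Only `r k` and `r N` (with `N = Fin.last n`) can be nonzero, so
`r N = -r k` and `r k ∧ (q k - q N) = 0`. The x-component of `r k` vanishes, so this reads
`r k.y * (x k - x N) = 0`, and `x k ≠ x N` gives `r k = 0`, hence `r N = 0`.
-/

open Finset

theorem sum_sum_univ_sdiff_singleton_eq_zero_of_antisymm {ι M : Type*} [Fintype ι] [DecidableEq ι]
    [AddCommGroup M] (F : ι → ι → M) (hF : ∀ i j, i ≠ j → F i j + F j i = 0) :
    ∑ i, ∑ j ∈ univ \ {i}, F i j = 0 := by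
  rw [← sum_finset_product' univ.offDiag _ _ (by simp [eq_comm])]
  exact sum_involution (fun p _ => p.swap) (fun p hp => hF _ _ (mem_offDiag.1 hp).2.2)
    (fun p hp _ h => (mem_offDiag.1 hp).2.2 (congrArg Prod.fst h).symm)
    (fun p hp => by simpa [and_comm, eq_comm] using hp) (fun p _ => p.swap_swap)

theorem newtonCoeff_comm {ι E : Type*} [NormedAddCommGroup E] (m : ι → ℝ) (q : ι → E) (i j : ι) :
    m i * m j / ‖q i - q j‖ ^ 3 = m j * m i / ‖q j - q i‖ ^ 3 := by
  rw [mul_comm, norm_sub_rev]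

section Newton

variable {ι E : Type*} [Fintype ι] [DecidableEq ι] [NormedAddCommGroup E] [NormedSpace ℝ E]

noncomputable def newtonForce (m : ι → ℝ) (q : ι → E) (i : ι) : E :=
  ∑ j ∈ univ \ {i}, (m i * m j / ‖q i - q j‖ ^ 3) • (q i - q j)

theorem sum_newtonForce (m : ι → ℝ) (q : ι → E) : ∑ i, newtonForce m q i = 0 :=
  sum_sum_univ_sdiff_singleton_eq_zero_of_antisymm _ fun i j _ => by
    rw [newtonCoeff_comm m q j i, ← smul_add, sub_add_sub_cancel, sub_self, smul_zero]

theorem sum_isAlt_newtonForce (m : ι → ℝ) (q : ι → E) {B : E →ₗ[ℝ] E →ₗ[ℝ] ℝ} (hB : B.IsAlt) :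
    ∑ i, B (newtonForce m q i) (q i) = 0 := by
  simp only [newtonForce, map_sum, LinearMap.sum_apply, map_smul, LinearMap.smul_apply]
  refine sum_sum_univ_sdiff_singleton_eq_zero_of_antisymm _ fun i j _ => ?_
  rw [newtonCoeff_comm m q j i, ← smul_add, ← neg_sub (q i) (q j), map_neg, LinearMap.neg_apply,
    ← sub_eq_add_neg, ← map_sub (B (q i - q j)), hB, smul_zero]

end Newton

theorem residual_eq_neg_and_isAlt_sub_eq_zero {ι R E M : Type*} [Fintype ι] [DecidableEq ι]
    [CommRing R] [AddCommGroup E] [Module R E] [AddCommGroup M] [Module R M]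
    {B : E →ₗ[R] E →ₗ[R] M} (hB : B.IsAlt) {f q : ι → E} {m : ι → R}
    (hf : ∑ i, f i = 0) (hfq : ∑ i, B (f i) (q i) = 0) (hmq : ∑ i, m i • q i = 0)
    {k l : ι} (hkl : k ≠ l) (h : ∀ i, i ≠ k → i ≠ l → m i • q i = f i) :
    f l - m l • q l = -(f k - m k • q k) ∧ B (f k - m k • q k) (q k - q l) = 0 := by
  set r : ι → E := fun i => f i - m i • q i
  have hr₀ : ∀ i, i ≠ k ∧ i ≠ l → r i = 0 := fun i hi => sub_eq_zero.2 (h i hi.1 hi.2).symm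
  have hr : ∑ i, r i = 0 := by simp only [r, sum_sub_distrib, hf, hmq, sub_zero]
  have hrq : ∑ i, B (r i) (q i) = 0 := by
    simp only [r, map_sub, map_smul, LinearMap.sub_apply, LinearMap.smul_apply, hB.self_eq_zero,
      smul_zero, sub_zero, hfq]
  have hrl : r l = -r k :=
    eq_neg_of_add_eq_zero_right (Fintype.sum_eq_add k l hkl hr₀ ▸ hr)
  refine ⟨hrl, ?_⟩
  rwa [Fintype.sum_eq_add k l hkl fun i hi => by rw [hr₀ i hi, map_zero, LinearMap.zero_apply],
    hrl, map_neg, LinearMap.neg_apply, ← sub_eq_add_neg, ← map_sub] at hrq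

noncomputable def planarCross :
    EuclideanSpace ℝ (Fin 2) →ₗ[ℝ] EuclideanSpace ℝ (Fin 2) →ₗ[ℝ] ℝ :=
  LinearMap.mk₂ ℝ (fun v w => v 0 * w 1 - v 1 * w 0)
    (fun _ _ _ => by simp only [PiLp.add_apply]; ring)
    (fun _ _ _ => by simp only [PiLp.smul_apply, smul_eq_mul]; ring)
    (fun _ _ _ => by simp only [PiLp.add_apply]; ring)
    (fun _ _ _ => by simp only [PiLp.smul_apply, smul_eq_mul]; ring)

theorem planarCross_apply (v w : EuclideanSpace ℝ (Fin 2)) :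
    planarCross v w = v 0 * w 1 - v 1 * w 0 := rfl

theorem planarCross_isAlt : planarCross.IsAlt := fun v => by
  rw [planarCross_apply, mul_comm, sub_self]

theorem eq_zero_of_planarCross_eq_zero {v w : EuclideanSpace ℝ (Fin 2)} (hv : v 0 = 0)
    (hw : w 0 ≠ 0) (h : planarCross v w = 0) : v = 0 := by
  rw [planarCross_apply, hv, zero_mul, zero_sub, neg_eq_zero, mul_eq_zero] at h
  ext i
  fin_cases i
  · exact hv
  · exact h.resolve_right hw

theorem reduced_system_recovers_full_system_general
    (n : ℕ)
    (q : Fin (n + 1) → EuclideanSpace ℝ (Fin 2)) (m : Fin (n + 1) → ℝ)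
    (f : Fin (n + 1) → EuclideanSpace ℝ (Fin 2))
    (hm : ∀ i, 0 < m i)
    (hf : ∀ i, f i = ∑ j ∈ Finset.univ \ {i},
      ((m i * m j) / ‖q i - q j‖ ^ 3) • (q i - q j))
    (k : Fin (n + 1)) (hk : k ≠ Fin.last n)
    (ha : ∀ i, i ≠ k → i ≠ Fin.last n → m i • q i = f i)
    (hb : m k * q k 0 = f k 0)
    (hc : q (Fin.last n) =
      (-(m (Fin.last n))⁻¹) • ∑ i ∈ Finset.univ \ {Fin.last n}, m i • q i)
    (hx : q k 0 ≠ q (Fin.last n) 0) :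
    ∀ i, q i = (m i)⁻¹ • f i := by
  have hforce : f = newtonForce m q := funext hf
  have hmass : ∑ i, m i • q i = 0 := by
    rw [sum_eq_add_sum_sdiff_singleton_of_mem (mem_univ (Fin.last n)), hc, smul_smul, mul_neg,
      mul_inv_cancel₀ (hm _).ne', neg_one_smul, neg_add_cancel]
  obtain ⟨hlast, hcross⟩ := residual_eq_neg_and_isAlt_sub_eq_zero planarCross_isAlt
    (hforce ▸ sum_newtonForce m q) (hforce ▸ sum_isAlt_newtonForce m q planarCross_isAlt)
    hmass hk ha
  have hk₀ : f k - m k • q k = 0 := eq_zero_of_planarCross_eq_zero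
    (by rw [PiLp.sub_apply, PiLp.smul_apply, smul_eq_mul, hb, sub_self]) (sub_ne_zero.2 hx) hcross
  have hbalance : ∀ i, m i • q i = f i := by
    intro i
    by_cases hik : i = k
    · exact hik ▸ (sub_eq_zero.1 hk₀).symm
    by_cases hiN : i = Fin.last n
    · rw [hk₀, neg_zero, sub_eq_zero] at hlast
      exact hiN ▸ hlast.symm
    exact ha i hik hiN
  exact fun i => (eq_inv_smul_iff₀ (hm i).ne').2 (hbalance i)

theorem reduced_system_recovers_full_system
    (n : ℕ)
    (q : Fin (n + 1) → EuclideanSpace ℝ (Fin 2)) (m : Fin (n + 1) → ℝ)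
    (f : Fin (n + 1) → EuclideanSpace ℝ (Fin 2))
    (hm : ∀ i, 0 < m i)
    (hq : ∀ i j, i ≠ j → q i ≠ q j)
    (hf : ∀ i, f i = ∑ j ∈ Finset.univ \ {i},
      ((m i * m j) / ‖q i - q j‖ ^ 3) • (q i - q j))
    (k : Fin (n + 1)) (hk : k ≠ Fin.last n)
    (ha : ∀ i, i ≠ k → i ≠ Fin.last n → m i • q i = f i)
    (hb : m k * q k 0 = f k 0)
    (hc : q (Fin.last n) =
      (-(m (Fin.last n))⁻¹) • ∑ i ∈ Finset.univ \ {Fin.last n}, m i • q i)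
    (hx : q k 0 ≠ q (Fin.last n) 0) :
    ∀ i, q i = (m i)⁻¹ • f i :=
  reduced_system_recovers_full_system_general n q m f hm hf k hk ha hb hc hx
end
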